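/- arXiv:1709.08782 — 8 statements merged into one kernel-verified Lean document; each statement's English description precedes it below -/
import Mathlib

section
/- Let n ≥ 3 and let I be the ideal of ℤ[x,y,z] generated by x^n - 1, y^n - 1, and z² - (Σ_{i,j=0}^{n-1} x^i y^j)·z. Then the quotient ring ℤ[x,y,z]/I is a free ℤ-module of rank 2n² with basis given by the images of {x^i y^j, x^i y^j z : 0 ≤ i, j ≤ n-1}. -/
open MvPolynomial Finset

/-!
Let `A = R[x]/(xⁿ - 1)`, `B = A[y]/(yⁿ - 1) ≅ R[Cₙ × Cₙ]` and `C = B[z]/(z² - N z)`, where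
`N = ∑ xⁱyʲ` is the norm element of `B`. Each step adjoins a root of a monic polynomial, so the
power bases of the three steps multiply to an `R`-basis `xⁱyʲzᵗ` (`i, j < n`, `t < 2`) of `C`.
The quotient `R[x,y,z]/I` and `C` are presented by the same generators and relations, so their
universal properties give mutually inverse `R`-algebra maps, and the basis transports along them.
-/

namespace Polynomial
variable {R : Type*} [CommRing R]

theorem monic_X_pow_sub_one {n : ℕ} (hn : n ≠ 0) : (X ^ n - 1 : R[X]).Monic := by
  simpa using monic_X_pow_sub_C (1 : R) hn

theorem natDegree_X_pow_sub_one [Nontrivial R] (n : ℕ) : (X ^ n - 1 : R[X]).natDegree = n := by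
  simpa using natDegree_X_pow_sub_C (n := n) (r := (1 : R))

theorem monic_X_sq_sub_C_mul_X (c : R) : (X ^ 2 - C c * X : R[X]).Monic :=
  monic_X_pow_sub ((degree_C_mul_X_le c).trans_lt (by norm_num))

theorem natDegree_X_sq_sub_C_mul_X [Nontrivial R] (c : R) :
    (X ^ 2 - C c * X : R[X]).natDegree = 2 := by
  rw [natDegree_sub_eq_left_of_natDegree_lt] <;> rw [natDegree_X_pow]
  exact ((natDegree_C_mul_le c X).trans natDegree_X_le).trans_lt one_lt_two

end Polynomial

open Polynomial

namespace AdjoinRoot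
variable {R : Type*} [CommRing R] {f : R[X]}

noncomputable def basisOfNatDegreeEq (hf : f.Monic) {d : ℕ} (hd : f.natDegree = d) :
    Module.Basis (Fin d) R (AdjoinRoot f) :=
  (powerBasis' hf).basis.reindex (finCongr hd)

@[simp]
theorem basisOfNatDegreeEq_apply (hf : f.Monic) {d : ℕ} (hd : f.natDegree = d) (i : Fin d) :
    basisOfNatDegreeEq hf hd i = root f ^ (i : ℕ) := by
  simp [basisOfNatDegreeEq, finCongr]

theorem nontrivial_of_natDegree_ne_zero [Nontrivial R] (hf : f.Monic) (h : f.natDegree ≠ 0) :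
    Nontrivial (AdjoinRoot f) :=
  haveI : Nonempty (Fin f.natDegree) := ⟨⟨0, Nat.pos_of_ne_zero h⟩⟩
  (powerBasisAux' hf).repr.toEquiv.nontrivial

end AdjoinRoot

noncomputable section

variable (R : Type*) [CommRing R] (n : ℕ)

abbrev CyclicGroupRing := AdjoinRoot (Polynomial.X ^ n - 1 : R[X])

instance [Nontrivial R] [NeZero n] : Nontrivial (CyclicGroupRing R n) :=
  AdjoinRoot.nontrivial_of_natDegree_ne_zero (monic_X_pow_sub_one (NeZero.ne n))
    (by rw [natDegree_X_pow_sub_one]; exact NeZero.ne n)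

theorem CyclicGroupRing.root_pow : (AdjoinRoot.root _ : CyclicGroupRing R n) ^ n = 1 := by
  have h := AdjoinRoot.eval₂_root (Polynomial.X ^ n - 1 : R[X])
  rwa [Polynomial.eval₂_sub, Polynomial.eval₂_X_pow, Polynomial.eval₂_one, sub_eq_zero] at h

abbrev CyclicGroupRing₂ := CyclicGroupRing (CyclicGroupRing R n) n

namespace CyclicGroupRing₂

def x : CyclicGroupRing₂ R n := AdjoinRoot.of _ (AdjoinRoot.root _)
def y : CyclicGroupRing₂ R n := AdjoinRoot.root _

theorem x_pow : x R n ^ n = 1 := by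
  rw [x, ← map_pow, CyclicGroupRing.root_pow, map_one]

theorem y_pow : y R n ^ n = 1 :=
  CyclicGroupRing.root_pow _ n

def normElement : CyclicGroupRing₂ R n := ∑ i ∈ range n, ∑ j ∈ range n, x R n ^ i * y R n ^ j

theorem map_normElement {S : Type*} [Semiring S] (φ : CyclicGroupRing₂ R n →+* S) :
    φ (normElement R n) = ∑ i ∈ range n, ∑ j ∈ range n, φ (x R n) ^ i * φ (y R n) ^ j := by
  simp only [normElement, map_sum, map_mul, map_pow]

end CyclicGroupRing₂

abbrev ClassRingModel :=
  AdjoinRoot (Polynomial.X ^ 2 - Polynomial.C (CyclicGroupRing₂.normElement R n) * Polynomial.X :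
    (CyclicGroupRing₂ R n)[X])

namespace ClassRingModel

def x : ClassRingModel R n := AdjoinRoot.of _ (CyclicGroupRing₂.x R n)
def y : ClassRingModel R n := AdjoinRoot.of _ (CyclicGroupRing₂.y R n)
def z : ClassRingModel R n := AdjoinRoot.root _

def basis [Nontrivial R] [NeZero n] :
    Module.Basis (Fin n × Fin n × Bool) R (ClassRingModel R n) :=
  let b₁ := AdjoinRoot.basisOfNatDegreeEq (monic_X_pow_sub_one (R := R) (NeZero.ne n))
    (natDegree_X_pow_sub_one n)
  let b₂ := AdjoinRoot.basisOfNatDegreeEq (monic_X_pow_sub_one (R := CyclicGroupRing R n)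
    (NeZero.ne n)) (natDegree_X_pow_sub_one n)
  let b₃ := AdjoinRoot.basisOfNatDegreeEq (monic_X_sq_sub_C_mul_X _) (natDegree_X_sq_sub_C_mul_X
    (CyclicGroupRing₂.normElement R n))
  (b₁.smulTower (b₂.smulTower b₃)).reindex
    ((Equiv.refl _).prodCongr ((Equiv.refl _).prodCongr finTwoEquiv))

theorem basis_apply [Nontrivial R] [NeZero n] (i j : Fin n) (t : Bool) :
    basis R n (i, j, t) = x R n ^ (i : ℕ) * y R n ^ (j : ℕ) * z R n ^ (if t then 1 else 0) := by
  simp only [basis, Module.Basis.reindex_apply, Module.Basis.smulTower_apply,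
    AdjoinRoot.basisOfNatDegreeEq_apply, Equiv.prodCongr_symm, Equiv.prodCongr_apply]
  rw [Algebra.smul_def, Algebra.smul_def,
    IsScalarTower.algebraMap_apply (CyclicGroupRing R n) (CyclicGroupRing₂ R n)]
  have ht : ((finTwoEquiv.symm t : Fin 2) : ℕ) = if t then 1 else 0 := by cases t <;> rfl
  simp [ht, x, y, z, CyclicGroupRing₂.x, CyclicGroupRing₂.y, AdjoinRoot.algebraMap_eq,
    mul_assoc]

theorem x_pow : x R n ^ n = 1 := by
  rw [x, ← map_pow, CyclicGroupRing₂.x_pow, map_one]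

theorem y_pow : y R n ^ n = 1 := by
  rw [y, ← map_pow, CyclicGroupRing₂.y_pow, map_one]

theorem z_sq : z R n ^ 2 = (∑ i ∈ range n, ∑ j ∈ range n, x R n ^ i * y R n ^ j) * z R n := by
  have h := AdjoinRoot.eval₂_root
    (Polynomial.X ^ 2 - Polynomial.C (CyclicGroupRing₂.normElement R n) * Polynomial.X)
  rw [Polynomial.eval₂_sub, Polynomial.eval₂_X_pow, Polynomial.eval₂_mul, Polynomial.eval₂_C,
    Polynomial.eval₂_X, sub_eq_zero] at h
  rw [z, h]
  exact congrArg (· * _) (CyclicGroupRing₂.map_normElement R n _)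

end ClassRingModel

def classRingIdeal : Ideal (MvPolynomial (Fin 3) R) :=
  Ideal.span {X 0 ^ n - 1, X 1 ^ n - 1,
    X 2 ^ 2 - (∑ i ∈ range n, ∑ j ∈ range n, X 0 ^ i * X 1 ^ j) * X 2}

abbrev ClassRing := MvPolynomial (Fin 3) R ⧸ classRingIdeal R n

namespace ClassRing

def x : ClassRing R n := Ideal.Quotient.mk _ (X 0)
def y : ClassRing R n := Ideal.Quotient.mk _ (X 1)
def z : ClassRing R n := Ideal.Quotient.mk _ (X 2)

theorem x_pow : x R n ^ n = 1 := by
  rw [x, ← map_pow, ← map_one (Ideal.Quotient.mk _), Ideal.Quotient.eq]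
  exact Ideal.subset_span (by simp)

theorem y_pow : y R n ^ n = 1 := by
  rw [y, ← map_pow, ← map_one (Ideal.Quotient.mk _), Ideal.Quotient.eq]
  exact Ideal.subset_span (by simp)

theorem z_sq : z R n ^ 2 = (∑ i ∈ range n, ∑ j ∈ range n, x R n ^ i * y R n ^ j) * z R n := by
  simp only [x, y, z, ← map_pow, ← map_mul, ← map_sum, Ideal.Quotient.eq]
  exact Ideal.subset_span (by simp)

def toModel : ClassRing R n →ₐ[R] ClassRingModel R n :=
  Ideal.Quotient.liftₐ _ (aeval ![ClassRingModel.x R n, ClassRingModel.y R n, ClassRingModel.z R n])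
    fun a ha => by
      refine (Ideal.span_le (I := RingHom.ker _)).2 ?_ ha
      rintro _ (rfl | rfl | rfl) <;>
        simp [ClassRingModel.x_pow, ClassRingModel.y_pow, ClassRingModel.z_sq]

def ofModel : ClassRingModel R n →ₐ[R] ClassRing R n :=
  AdjoinRoot.liftAlgHom _
    (AdjoinRoot.liftAlgHom _
      (AdjoinRoot.liftAlgHom _ (Algebra.ofId R _) (x R n) (by simp [x_pow]))
      (y R n) (by simp [y_pow]))
    (z R n) (by
      rw [Polynomial.eval₂_sub, Polynomial.eval₂_X_pow, Polynomial.eval₂_mul, Polynomial.eval₂_C,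
        Polynomial.eval₂_X, CyclicGroupRing₂.map_normElement, sub_eq_zero]
      simp [CyclicGroupRing₂.x, CyclicGroupRing₂.y, z_sq])

theorem toModel_x : toModel R n (x R n) = ClassRingModel.x R n :=
  aeval_X _ 0

theorem toModel_y : toModel R n (y R n) = ClassRingModel.y R n :=
  aeval_X _ 1

theorem toModel_z : toModel R n (z R n) = ClassRingModel.z R n :=
  aeval_X _ 2

@[simp]
theorem ofModel_x : ofModel R n (ClassRingModel.x R n) = x R n := by
  simp [ofModel, ClassRingModel.x, CyclicGroupRing₂.x]

@[simp]
theorem ofModel_y : ofModel R n (ClassRingModel.y R n) = y R n := by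
  simp [ofModel, ClassRingModel.y, CyclicGroupRing₂.y]

@[simp]
theorem ofModel_z : ofModel R n (ClassRingModel.z R n) = z R n := by
  simp [ofModel, ClassRingModel.z]

def modelEquiv : ClassRingModel R n ≃ₐ[R] ClassRing R n :=
  AlgEquiv.ofAlgHom (ofModel R n) (toModel R n)
    (by
      apply Ideal.Quotient.algHom_ext
      ext i
      fin_cases i
      · exact (congrArg (ofModel R n) (toModel_x R n)).trans (ofModel_x R n)
      · exact (congrArg (ofModel R n) (toModel_y R n)).trans (ofModel_y R n)
      · exact (congrArg (ofModel R n) (toModel_z R n)).trans (ofModel_z R n))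
    (by
      ext
      · exact (congrArg (toModel R n) (ofModel_x R n)).trans (toModel_x R n)
      · exact (congrArg (toModel R n) (ofModel_y R n)).trans (toModel_y R n)
      · exact (congrArg (toModel R n) (ofModel_z R n)).trans (toModel_z R n))

def basis [Nontrivial R] [NeZero n] : Module.Basis (Fin n × Fin n × Bool) R (ClassRing R n) :=
  (ClassRingModel.basis R n).map (modelEquiv R n).toLinearEquiv

theorem basis_apply [Nontrivial R] [NeZero n] (i j : Fin n) (t : Bool) :
    basis R n (i, j, t) = Ideal.Quotient.mk _
      (X 0 ^ (i : ℕ) * X 1 ^ (j : ℕ) * X 2 ^ (if t then 1 else 0)) := by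
  rw [basis, Module.Basis.map_apply, ClassRingModel.basis_apply]
  cases t <;> simp [modelEquiv, x, y, z]

end ClassRing
end

/-- `ℤ[x,y,z]/(xⁿ-1, yⁿ-1, z² - (Σ xⁱyʲ)z)` (the projective class ring of `𝓗_n(q)`)
is a free `ℤ`-module of rank `2n²` with basis the images of
`{xⁱyʲ, xⁱyʲz : 0 ≤ i,j ≤ n-1}`. -/
theorem stmt_7 (n : ℕ) (hn : 3 ≤ n)
    (I : Ideal (MvPolynomial (Fin 3) ℤ))
    (hI : I = Ideal.span
      { X 0 ^ n - 1, X 1 ^ n - 1,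
        X 2 ^ 2 - (∑ i ∈ range n, ∑ j ∈ range n, X 0 ^ i * X 1 ^ j) * X 2 }) :
    ∃ B : Module.Basis (Fin n × Fin n × Bool) ℤ (MvPolynomial (Fin 3) ℤ ⧸ I),
      ∀ (i j : Fin n) (t : Bool),
        B (i, j, t) = Ideal.Quotient.mk I
          (X 0 ^ (i : ℕ) * X 1 ^ (j : ℕ) * X 2 ^ (if t then 1 else 0)) := by
  subst hI
  have : NeZero n := ⟨by omega⟩
  exact ⟨ClassRing.basis ℤ n, ClassRing.basis_apply ℤ n⟩
end

section
/- Let n ≥ 3 and let I be the ideal of ℤ[x,y,z] generated by x^n - 1, y^n - 1, and z² - n·(Σ_{i=0}^{n-1} x^i)·z. Then the quotient ring ℤ[x,y,z]/I is a free ℤ-module of rank 2n² with basis given by the images of {x^i y^j, x^i y^j z : 0 ≤ i, j ≤ n-1}. -/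
/-!
Let `A = ℤ[C_n × C_n]` be the group ring, with generators `x = (1,0)`, `y = (0,1)`, and let
`M = A[z]/(z² - n(Σ xⁱ)z)`. Since `z² - n(Σ xⁱ)z` is monic of degree 2, `M` is free over `A` with
basis `1, z`, hence free over `ℤ` with basis `xⁱyʲzᵗ`. The relations hold in `M`, so
`x, y, z ↦ x, y, z` induces a ring map `ℤ[x,y,z]/I → M` sending our monomials to this basis;
hence they are linearly independent. They span because, by the relations, their span is stable
under multiplication by `x`, `y` and `z`.
-/

open MvPolynomial Finset
open Fin.NatCast

section QuadraticExtension

variable {R A ι : Type*} [CommRing R] [CommRing A] [Algebra R A]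

lemma Polynomial.monic_X_sq_sub_C_mul_X_s8 [Nontrivial A] (a : A) :
    (Polynomial.X ^ 2 - Polynomial.C a * Polynomial.X).Monic :=
  Polynomial.monic_X_pow_sub <| (Polynomial.degree_C_mul_X_le a).trans_lt (by norm_num)

lemma Polynomial.natDegree_X_sq_sub_C_mul_X_s8 [Nontrivial A] (a : A) :
    (Polynomial.X ^ 2 - Polynomial.C a * Polynomial.X).natDegree = 2 := by
  rw [Polynomial.natDegree_sub_eq_left_of_natDegree_lt] <;> simp
  exact Polynomial.natDegree_le_of_degree_le (Polynomial.degree_C_mul_X_le a)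

lemma AdjoinRoot.root_sq_of_X_sq_sub_C_mul_X (a : A) :
    root (Polynomial.X ^ 2 - Polynomial.C a * Polynomial.X) ^ 2 =
      of _ a * root (Polynomial.X ^ 2 - Polynomial.C a * Polynomial.X) := by
  have h := eval₂_root (Polynomial.X ^ 2 - Polynomial.C a * Polynomial.X)
  rwa [Polynomial.eval₂_sub, Polynomial.eval₂_X_pow, Polynomial.eval₂_mul, Polynomial.eval₂_C,
    Polynomial.eval₂_X, sub_eq_zero] at h

noncomputable def AdjoinRoot.basisOfQuadratic (b : Module.Basis ι R A) {q : Polynomial A}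
    (hq : q.Monic) (h2 : q.natDegree = 2) : Module.Basis (ι × Bool) R (AdjoinRoot q) :=
  b.smulTower ((powerBasis' hq).basis.reindex
    ((finCongr ((powerBasis'_dim hq).trans h2)).trans finTwoEquiv))

lemma AdjoinRoot.basisOfQuadratic_apply (b : Module.Basis ι R A) {q : Polynomial A}
    (hq : q.Monic) (h2 : q.natDegree = 2) (i : ι) (t : Bool) :
    basisOfQuadratic b hq h2 (i, t) = of q (b i) * root q ^ (if t then 1 else 0) := by
  rw [basisOfQuadratic, Module.Basis.smulTower_apply, Module.Basis.reindex_apply,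
    PowerBasis.basis_eq_pow, Algebra.smul_def, algebraMap_eq, powerBasis'_gen]
  cases t <;> rfl

end QuadraticExtension

section ReducedMonomial

variable {Q Q' : Type*} [CommRing Q] [CommRing Q'] (n : ℕ) (x y z : Q)

def reducedMonomial (p : Fin n × Fin n × Bool) : Q :=
  x ^ (p.1 : ℕ) * y ^ (p.2.1 : ℕ) * z ^ (if p.2.2 then 1 else 0)

lemma map_reducedMonomial (f : Q →+* Q') (p : Fin n × Fin n × Bool) :
    f (reducedMonomial n x y z p) = reducedMonomial n (f x) (f y) (f z) p := by
  simp only [reducedMonomial, map_mul, map_pow]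

variable {n x y z} [NeZero n]

lemma pow_mul_pow_mul_mem_span_reducedMonomial (hx : x ^ n = 1) (hy : y ^ n = 1)
    (a b : ℕ) (t : Bool) :
    x ^ a * y ^ b * z ^ (if t then 1 else 0) ∈
      Submodule.span ℤ (Set.range (reducedMonomial n x y z)) := by
  refine Submodule.subset_span ⟨((a : Fin n), (b : Fin n), t), ?_⟩
  simp only [reducedMonomial, Fin.val_natCast, ← pow_eq_pow_mod a hx, ← pow_eq_pow_mod b hy]

theorem mul_mem_span_reducedMonomial (hx : x ^ n = 1) (hy : y ^ n = 1)
    (hz : z ^ 2 = n * (∑ i ∈ range n, x ^ i) * z) {g : Q} (hg : g = x ∨ g = y ∨ g = z)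
    {s : Q} (hs : s ∈ Submodule.span ℤ (Set.range (reducedMonomial n x y z))) :
    g * s ∈ Submodule.span ℤ (Set.range (reducedMonomial n x y z)) := by
  have hmem := pow_mul_pow_mul_mem_span_reducedMonomial (z := z) hx hy
  suffices h : ∀ p, g * reducedMonomial n x y z p ∈
      Submodule.span ℤ (Set.range (reducedMonomial n x y z)) from
    Submodule.span_le (p := (Submodule.span ℤ _).comap (LinearMap.mulLeft ℤ g)) |>.mpr
      (Set.range_subset_iff.mpr h) hs
  rintro ⟨i, j, t⟩
  rcases hg with rfl | rfl | rfl
  · convert hmem (i + 1) j t using 1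
    simp only [reducedMonomial]; ring
  · convert hmem i (j + 1) t using 1
    simp only [reducedMonomial]; ring
  · cases t
    · convert hmem i j true using 1
      simp only [reducedMonomial, Bool.false_eq_true, if_false, if_true]; ring
    · have hsum : g * reducedMonomial n x y g (i, j, true) =
          ∑ k ∈ range n, (n : ℤ) • (x ^ ((i : ℕ) + k) * y ^ (j : ℕ) * g) :=
        calc g * reducedMonomial n x y g (i, j, true) = x ^ (i : ℕ) * y ^ (j : ℕ) * g ^ 2 := by
              simp only [reducedMonomial, if_true]; ring
          _ = _ := by
              rw [hz, Finset.mul_sum, Finset.sum_mul, Finset.mul_sum]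
              refine Finset.sum_congr rfl fun k _ => ?_
              rw [zsmul_eq_mul, Int.cast_natCast]; ring
      rw [hsum]
      exact Submodule.sum_mem _ fun k _ => Submodule.smul_mem _ _ (by simpa using hmem _ _ true)

end ReducedMonomial

lemma Ideal.Quotient.submodule_eq_top_of_X_mul_mem {σ R : Type*} [CommRing R]
    {I : Ideal (MvPolynomial σ R)} (S : Submodule R (MvPolynomial σ R ⧸ I)) (h1 : 1 ∈ S)
    (hX : ∀ k, ∀ s ∈ S, Ideal.Quotient.mk I (X k) * s ∈ S) : S = ⊤ := by
  rw [eq_top_iff]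
  rintro q -
  obtain ⟨p, rfl⟩ := Ideal.Quotient.mk_surjective q
  induction p using MvPolynomial.induction_on with
  | C r =>
    rw [← MvPolynomial.algebraMap_eq, Ideal.Quotient.mk_algebraMap,
      Algebra.algebraMap_eq_smul_one]
    exact S.smul_mem r h1
  | add p q hp hq => rw [map_add]; exact S.add_mem hp hq
  | mul_X p k hp => rw [map_mul, mul_comm]; exact hX k _ hp

namespace ProjectiveClassRing

variable (n : ℕ) [NeZero n]

noncomputable def genX : AddMonoidAlgebra ℤ (Fin n × Fin n) := AddMonoidAlgebra.single (1, 0) 1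

noncomputable def genY : AddMonoidAlgebra ℤ (Fin n × Fin n) := AddMonoidAlgebra.single (0, 1) 1

lemma genX_pow_mul_genY_pow (i j : Fin n) :
    genX n ^ (i : ℕ) * genY n ^ (j : ℕ) = AddMonoidAlgebra.single (i, j) 1 := by
  simp [genX, genY, AddMonoidAlgebra.single_pow, AddMonoidAlgebra.single_mul_single, nsmul_one]

lemma single_pow_card (g : Fin n × Fin n) : AddMonoidAlgebra.single g (1 : ℤ) ^ n = 1 := by
  have hg : n • g = 0 := Prod.ext (by simpa using card_nsmul_eq_zero (x := g.1))
    (by simpa using card_nsmul_eq_zero (x := g.2))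
  rw [AddMonoidAlgebra.single_pow, hg, one_pow, AddMonoidAlgebra.one_def]

noncomputable def scaledNorm : AddMonoidAlgebra ℤ (Fin n × Fin n) :=
  n * ∑ i ∈ range n, genX n ^ i

local notation "Model" n =>
  AdjoinRoot (Polynomial.X ^ 2 - Polynomial.C (scaledNorm n) * Polynomial.X)

noncomputable def toModel : MvPolynomial (Fin 3) ℤ →ₐ[ℤ] Model n :=
  aeval ![AdjoinRoot.of _ (genX n), AdjoinRoot.of _ (genY n), AdjoinRoot.root _]

@[simp] lemma toModel_X0 : toModel n (X 0) = AdjoinRoot.of _ (genX n) := aeval_X _ _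

@[simp] lemma toModel_X1 : toModel n (X 1) = AdjoinRoot.of _ (genY n) := aeval_X _ _

@[simp] lemma toModel_X2 : toModel n (X 2) = AdjoinRoot.root _ := aeval_X _ _

lemma toModel_eq_zero_of_mem_span {p : MvPolynomial (Fin 3) ℤ} (hp : p ∈ Ideal.span
      { X 0 ^ n - 1, X 1 ^ n - 1,
        X 2 ^ 2 - (n : MvPolynomial (Fin 3) ℤ) * (∑ i ∈ range n, X 0 ^ i) * X 2 }) :
    toModel n p = 0 := by
  revert p
  simp_rw [← RingHom.mem_ker, ← SetLike.le_def, Ideal.span_le]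
  rintro _ (rfl | rfl | rfl) <;> rw [SetLike.mem_coe, RingHom.mem_ker]
  · rw [map_sub, map_pow, toModel_X0, ← map_pow, genX, single_pow_card, map_one, map_one,
      sub_self]
  · rw [map_sub, map_pow, toModel_X1, ← map_pow, genY, single_pow_card, map_one, map_one,
      sub_self]
  · rw [map_sub, sub_eq_zero, map_pow, toModel_X2, AdjoinRoot.root_sq_of_X_sq_sub_C_mul_X]
    show AdjoinRoot.of _ (n * ∑ i ∈ range n, genX n ^ i) * _ = _
    simp only [map_mul, map_natCast, map_sum, map_pow, toModel_X0, toModel_X2]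

noncomputable def modelBasis : Module.Basis (Fin n × Fin n × Bool) ℤ (Model n) :=
  (AdjoinRoot.basisOfQuadratic (AddMonoidAlgebra.basis (Fin n × Fin n) ℤ)
    (Polynomial.monic_X_sq_sub_C_mul_X_s8 _) (Polynomial.natDegree_X_sq_sub_C_mul_X_s8 _)).reindex
    (Equiv.prodAssoc _ _ _)

lemma modelBasis_eq_reducedMonomial :
    ⇑(modelBasis n) = reducedMonomial n (AdjoinRoot.of _ (genX n)) (AdjoinRoot.of _ (genY n))
      (AdjoinRoot.root _) := by
  ext ⟨i, j, t⟩
  rw [modelBasis, Module.Basis.reindex_apply, Equiv.prodAssoc_symm_apply,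
    AdjoinRoot.basisOfQuadratic_apply, AddMonoidAlgebra.basis_apply, ← genX_pow_mul_genY_pow,
    map_mul, map_pow, map_pow, reducedMonomial]

variable {n} {I : Ideal (MvPolynomial (Fin 3) ℤ)}
  (hI : I = Ideal.span
    { X 0 ^ n - 1, X 1 ^ n - 1,
      X 2 ^ 2 - (n : MvPolynomial (Fin 3) ℤ) * (∑ i ∈ range n, X 0 ^ i) * X 2 })
include hI

theorem linearIndependent_reducedMonomial :
    LinearIndependent ℤ (reducedMonomial n (Ideal.Quotient.mk I (X 0))
      (Ideal.Quotient.mk I (X 1)) (Ideal.Quotient.mk I (X 2))) := by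
  let φ := Ideal.Quotient.liftₐ I (toModel n) fun p hp => toModel_eq_zero_of_mem_span n (hI ▸ hp)
  refine LinearIndependent.of_comp φ.toLinearMap ?_
  have hφ : φ.toLinearMap ∘ reducedMonomial n (Ideal.Quotient.mk I (X 0))
      (Ideal.Quotient.mk I (X 1)) (Ideal.Quotient.mk I (X 2)) = modelBasis n := by
    ext p
    rw [modelBasis_eq_reducedMonomial, Function.comp_apply, AlgHom.toLinearMap_apply,
      ← RingHom.coe_coe φ, map_reducedMonomial]
    have hφ_mk (q : MvPolynomial (Fin 3) ℤ) : φ (Ideal.Quotient.mk I q) = toModel n q := rfl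
    simp only [RingHom.coe_coe, hφ_mk, toModel_X0, toModel_X1, toModel_X2]
  rw [hφ]
  -- `convert` identifies the algebra's `Module ℤ` structure with `AddCommGroup.toIntModule`.
  convert (modelBasis n).linearIndependent

theorem span_reducedMonomial_eq_top :
    Submodule.span ℤ (Set.range (reducedMonomial n (Ideal.Quotient.mk I (X 0))
      (Ideal.Quotient.mk I (X 1)) (Ideal.Quotient.mk I (X 2)))) = ⊤ := by
  have hx : Ideal.Quotient.mk I (X 0) ^ n = 1 := by
    have h : X 0 ^ n - 1 ∈ I := hI ▸ Ideal.subset_span (Set.mem_insert _ _)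
    simpa using Ideal.Quotient.eq.mpr h
  have hy : Ideal.Quotient.mk I (X 1) ^ n = 1 := by
    have h : X 1 ^ n - 1 ∈ I :=
      hI ▸ Ideal.subset_span (Set.mem_insert_of_mem _ (Set.mem_insert _ _))
    simpa using Ideal.Quotient.eq.mpr h
  have hz : Ideal.Quotient.mk I (X 2) ^ 2 =
      n * (∑ i ∈ range n, Ideal.Quotient.mk I (X 0) ^ i) * Ideal.Quotient.mk I (X 2) := by
    have h : X 2 ^ 2 - (n : MvPolynomial (Fin 3) ℤ) * (∑ i ∈ range n, X 0 ^ i) * X 2 ∈ I :=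
      hI ▸ Ideal.subset_span (Set.mem_insert_of_mem _ (Set.mem_insert_of_mem _ rfl))
    simpa only [map_pow, map_mul, map_natCast, map_sum] using Ideal.Quotient.eq.mpr h
  refine Ideal.Quotient.submodule_eq_top_of_X_mul_mem _ ?_ fun k s hs => ?_
  · simpa using pow_mul_pow_mul_mem_span_reducedMonomial (z := Ideal.Quotient.mk I (X 2)) hx hy
      0 0 false
  · refine mul_mem_span_reducedMonomial hx hy hz ?_ hs
    fin_cases k <;> simp

end ProjectiveClassRing

/-- `ℤ[x,y,z]/(xⁿ-1, yⁿ-1, z² - n(Σ xⁱ)z)` (the projective class ring of `H_n(0,q)`)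
is a free `ℤ`-module of rank `2n²` with basis the images of
`{xⁱyʲ, xⁱyʲz : 0 ≤ i,j ≤ n-1}`. -/
theorem stmt_8 (n : ℕ) (hn : 3 ≤ n)
    (I : Ideal (MvPolynomial (Fin 3) ℤ))
    (hI : I = Ideal.span
      { X 0 ^ n - 1, X 1 ^ n - 1,
        X 2 ^ 2 - (n : MvPolynomial (Fin 3) ℤ) * (∑ i ∈ range n, X 0 ^ i) * X 2 }) :
    ∃ B : Module.Basis (Fin n × Fin n × Bool) ℤ (MvPolynomial (Fin 3) ℤ ⧸ I),
      ∀ (i j : Fin n) (t : Bool),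
        B (i, j, t) = Ideal.Quotient.mk I
          (X 0 ^ (i : ℕ) * X 1 ^ (j : ℕ) * X 2 ^ (if t then 1 else 0)) := by
  have : NeZero n := ⟨by omega⟩
  refine ⟨Module.Basis.mk (ProjectiveClassRing.linearIndependent_reducedMonomial hI)
    (ProjectiveClassRing.span_reducedMonomial_eq_top hI).ge, fun i j t => ?_⟩
  simp only [Module.Basis.mk_apply, reducedMonomial, map_mul, map_pow]
end

section
/- Let K be a field of characteristic not dividing n, n ≥ 3, and let R = K[x,y,z]/(x^n - 1, y^n - 1, z² - n²z, (1-x)z, (1-y)z). Then R is isomorphic as a K-algebra to K^{n²+1}. -/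
open MvPolynomial

/-!
The relations cut out `n² + 1` points: where `z = 0`, `x` and `y` are arbitrary `n`-th roots of
unity `qⁱ, qʲ`, and where `z ≠ 0`, `x = y = 1` and `z = n²`. They are distinct because `q` is
primitive and `n ≠ 0` in `K`, so by the Chinese remainder theorem evaluation at them maps `R` onto
`K^{n²+1}`. Conversely the relations show that `R` is spanned by the `n² + 1` elements `xᵃ yᵇ`
(`a, b < n`) and `z`, so this surjection is an isomorphism.
-/

theorem Submodule.eq_top_of_mul_mem_of_adjoin_eq_top {R A : Type*} [CommSemiring R] [Semiring A]
    [Algebra R A] {s : Set A} (hs : Algebra.adjoin R s = ⊤) {S : Submodule R A} (h1 : 1 ∈ S)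
    (hmul : ∀ a ∈ s, ∀ m ∈ S, m * a ∈ S) : S = ⊤ := by
  have key : ∀ a ∈ Algebra.adjoin R s, ∀ m ∈ S, m * a ∈ S := by
    intro a ha
    induction ha using Algebra.adjoin_induction with
    | mem a ha => exact hmul a ha
    | algebraMap r =>
      intro m hm
      rw [← Algebra.commutes, ← Algebra.smul_def]
      exact S.smul_mem r hm
    | add a b _ _ ha hb => exact fun m hm => mul_add m a b ▸ S.add_mem (ha m hm) (hb m hm)
    | mul a b _ _ ha hb => exact fun m hm => mul_assoc m a b ▸ hb _ (ha m hm)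
  exact eq_top_iff.2 fun a _ => one_mul a ▸ key a (hs ▸ trivial) 1 h1

theorem MvPolynomial.exists_eval_eq_of_injective {σ ι K : Type*} [Field K] [Finite ι]
    {v : ι → σ → K} (hv : Function.Injective v) (c : ι → K) :
    ∃ p : MvPolynomial σ K, ∀ i, eval (v i) p = c i := by
  have hmax : ∀ i, (RingHom.ker (eval (v i))).IsMaximal := fun i =>
    RingHom.ker_isMaximal_of_surjective _ fun a => ⟨C a, eval_C a⟩
  have hker : ∀ i j, RingHom.ker (eval (v i)) = RingHom.ker (eval (v j)) → i = j := by
    intro i j h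
    apply hv
    funext k
    have : X k - C (v i k) ∈ RingHom.ker (eval (v j)) := h ▸ by simp [RingHom.mem_ker]
    simpa [RingHom.mem_ker, sub_eq_zero, eq_comm] using this
  obtain ⟨p, hp⟩ := Ideal.pi_quotient_surjective
    (fun i j hij => Ideal.isCoprime_iff_sup_eq.mpr
      ((hmax i).coprime_of_ne (hmax j) (mt (hker i j) hij)))
    (fun i => Ideal.Quotient.mk (RingHom.ker (eval (v i))) (C (c i)))
  refine ⟨p, fun i => ?_⟩
  simpa [RingHom.mem_ker, sub_eq_zero] using Ideal.Quotient.eq.mp (hp i)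

theorem pow_mul_eq_self_of_mul_eq_self {M : Type*} [Monoid M] {x z : M} (h : x * z = z) (k : ℕ) :
    x ^ k * z = z := by
  induction k with
  | zero => rw [pow_zero, one_mul]
  | succ k ih => rw [pow_succ, mul_assoc, h, ih]

section Relations

variable {K A : Type*} [Field K] [CommRing A] [Algebra K A] {n : ℕ} {c : K} {x y z : A}

def monomialFamily (n : ℕ) (x y z : A) : (Fin n × Fin n) ⊕ Unit → A :=
  Sum.elim (fun p => x ^ (p.1 : ℕ) * y ^ (p.2 : ℕ)) fun _ => z

theorem monomialFamily_inl (n : ℕ) (x y z : A) (i j : Fin n) :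
    monomialFamily n x y z (.inl (i, j)) = x ^ (i : ℕ) * y ^ (j : ℕ) := rfl

theorem monomialFamily_inr (n : ℕ) (x y z : A) (u : Unit) :
    monomialFamily n x y z (.inr u) = z := rfl

theorem mul_mem_span_monomialFamily (hx : x ^ n = 1) (hy : y ^ n = 1) (hz : z ^ 2 = c • z)
    (hxz : x * z = z) (hyz : y * z = z) :
    ∀ a ∈ ({x, y, z} : Set A), ∀ m ∈ Submodule.span K (Set.range (monomialFamily n x y z)),
      m * a ∈ Submodule.span K (Set.range (monomialFamily n x y z)) := by
  have mem e : monomialFamily n x y z e ∈ Submodule.span K (Set.range (monomialFamily n x y z)) :=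
    Submodule.subset_span ⟨e, rfl⟩
  intro a ha m hm
  induction hm using Submodule.span_induction with
  | zero => rw [zero_mul]; exact Submodule.zero_mem _
  | add u v _ _ hu hv => rw [add_mul]; exact Submodule.add_mem _ hu hv
  | smul r u _ hu => rw [smul_mul_assoc]; exact Submodule.smul_mem _ r hu
  | mem m hm =>
    obtain ⟨⟨i, j⟩ | _, rfl⟩ := hm <;> rcases ha with rfl | rfl | rfl <;>
      simp only [monomialFamily_inl, monomialFamily_inr]
    · convert mem (.inl (⟨(i + 1) % n, Nat.mod_lt _ i.pos⟩, j)) using 1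
      rw [monomialFamily_inl, mul_right_comm, ← pow_succ, ← pow_eq_pow_mod _ hx]
    · convert mem (.inl (i, ⟨(j + 1) % n, Nat.mod_lt _ j.pos⟩)) using 1
      rw [monomialFamily_inl, mul_assoc, ← pow_succ, ← pow_eq_pow_mod _ hy]
    · rw [mul_assoc, pow_mul_eq_self_of_mul_eq_self hyz, pow_mul_eq_self_of_mul_eq_self hxz]
      exact mem (.inr ())
    · rw [mul_comm, hxz]; exact mem (.inr ())
    · rw [mul_comm, hyz]; exact mem (.inr ())
    · rw [← sq, hz]; exact Submodule.smul_mem _ c (mem (.inr ()))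

theorem span_range_monomialFamily_eq_top (hn : 0 < n) (hgen : Algebra.adjoin K {x, y, z} = ⊤)
    (hx : x ^ n = 1) (hy : y ^ n = 1) (hz : z ^ 2 = c • z) (hxz : x * z = z) (hyz : y * z = z) :
    Submodule.span K (Set.range (monomialFamily n x y z)) = ⊤ := by
  refine Submodule.eq_top_of_mul_mem_of_adjoin_eq_top hgen ?_
    (mul_mem_span_monomialFamily hx hy hz hxz hyz)
  have h : monomialFamily n x y z (.inl (⟨0, hn⟩, ⟨0, hn⟩)) ∈
      Submodule.span K (Set.range (monomialFamily n x y z)) :=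
    Submodule.subset_span ⟨_, rfl⟩
  rwa [monomialFamily_inl, pow_zero, pow_zero, mul_one] at h

end Relations

def relations (n : ℕ) (K : Type*) [Field K] : Set (MvPolynomial (Fin 3) K) :=
  { X 0 ^ n - 1, X 1 ^ n - 1, X 2 ^ 2 - (n : MvPolynomial (Fin 3) K) ^ 2 * X 2,
    (1 - X 0) * X 2, (1 - X 1) * X 2 }

noncomputable def relationIdeal (n : ℕ) (K : Type*) [Field K] : Ideal (MvPolynomial (Fin 3) K) :=
  Ideal.span (relations n K)

abbrev RelationQuotient (n : ℕ) (K : Type*) [Field K] :=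
  MvPolynomial (Fin 3) K ⧸ relationIdeal n K

namespace RelationQuotient

variable {n : ℕ} {K : Type*} [Field K]

noncomputable abbrev gen (i : Fin 3) : RelationQuotient n K :=
  Ideal.Quotient.mk _ (X i)

theorem mk_eq_zero_of_mem_relations (p : MvPolynomial (Fin 3) K) (hp : p ∈ relations n K) :
    Ideal.Quotient.mk (relationIdeal n K) p = 0 :=
  Ideal.Quotient.eq_zero_iff_mem.mpr (Ideal.subset_span hp)

theorem gen_zero_pow : (gen 0 : RelationQuotient n K) ^ n = 1 := by
  have h := mk_eq_zero_of_mem_relations (n := n) (K := K) (X 0 ^ n - 1) (by simp [relations])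
  rwa [map_sub, map_pow, map_one, sub_eq_zero] at h

theorem gen_one_pow : (gen 1 : RelationQuotient n K) ^ n = 1 := by
  have h := mk_eq_zero_of_mem_relations (n := n) (K := K) (X 1 ^ n - 1) (by simp [relations])
  rwa [map_sub, map_pow, map_one, sub_eq_zero] at h

theorem gen_two_sq : (gen 2 : RelationQuotient n K) ^ 2 = ((n : K) ^ 2) • gen 2 := by
  have h := mk_eq_zero_of_mem_relations (n := n) (K := K)
    (X 2 ^ 2 - (n : MvPolynomial (Fin 3) K) ^ 2 * X 2)
    (by simp [relations])
  rw [map_sub, map_mul, sub_eq_zero] at h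
  rw [← map_pow, h, Algebra.smul_def (A := RelationQuotient n K), map_pow, map_pow, map_natCast,
    map_natCast]

theorem gen_zero_mul_gen_two : (gen 0 : RelationQuotient n K) * gen 2 = gen 2 := by
  have h := mk_eq_zero_of_mem_relations (n := n) (K := K) ((1 - X 0) * X 2) (by simp [relations])
  rwa [map_mul, map_sub, map_one, sub_mul, one_mul, sub_eq_zero, eq_comm] at h

theorem gen_one_mul_gen_two : (gen 1 : RelationQuotient n K) * gen 2 = gen 2 := by
  have h := mk_eq_zero_of_mem_relations (n := n) (K := K) ((1 - X 1) * X 2) (by simp [relations])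
  rwa [map_mul, map_sub, map_one, sub_mul, one_mul, sub_eq_zero, eq_comm] at h

theorem adjoin_gen_eq_top :
    Algebra.adjoin K {gen 0, gen 1, gen 2} = (⊤ : Subalgebra K (RelationQuotient n K)) := by
  rw [eq_top_iff]
  rintro a -
  obtain ⟨p, rfl⟩ := Ideal.Quotient.mk_surjective a
  induction p using MvPolynomial.induction_on with
  | C a => exact Subalgebra.algebraMap_mem _ a
  | add p r hp hr => rw [map_add]; exact add_mem hp hr
  | mul_X p i hp =>
    rw [map_mul]
    exact mul_mem hp (Algebra.subset_adjoin (by fin_cases i <;> simp))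

theorem span_range_monomialFamily_eq_top (hn : 0 < n) :
    Submodule.span K (Set.range (monomialFamily n (gen 0 : RelationQuotient n K) (gen 1) (gen 2)))
      = ⊤ :=
  _root_.span_range_monomialFamily_eq_top hn adjoin_gen_eq_top gen_zero_pow
    gen_one_pow gen_two_sq gen_zero_mul_gen_two gen_one_mul_gen_two

theorem finite_of_pos (hn : 0 < n) : Module.Finite K (RelationQuotient n K) :=
  ⟨span_range_monomialFamily_eq_top (K := K) hn ▸ Submodule.fg_span (Set.finite_range _)⟩

theorem finrank_le (hn : 0 < n) : Module.finrank K (RelationQuotient n K) ≤ n ^ 2 + 1 := by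
  simpa [sq] using finrank_le_of_span_eq_top (span_range_monomialFamily_eq_top (K := K) hn)

def evalPoint (q : K) (n : ℕ) : (Fin n × Fin n) ⊕ Unit → Fin 3 → K :=
  Sum.elim (fun p => ![q ^ (p.1 : ℕ), q ^ (p.2 : ℕ), 0]) fun _ => ![1, 1, (n : K) ^ 2]

theorem evalPoint_injective {q : K} (hq : IsPrimitiveRoot q n) (hn : (n : K) ≠ 0) :
    Function.Injective (evalPoint q n) := by
  rintro (⟨i, j⟩ | u) (⟨i', j'⟩ | u') h
  · have hi := hq.pow_inj i.2 i'.2 (congrFun h 0)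
    have hj := hq.pow_inj j.2 j'.2 (congrFun h 1)
    simp_all [Fin.ext_iff]
  · simpa [evalPoint, hn] using (congrFun h 2).symm
  · simpa [evalPoint, hn] using congrFun h 2
  · rfl

theorem relationIdeal_le_ker_eval {q : K} (hq : q ^ n = 1) (e : (Fin n × Fin n) ⊕ Unit) :
    relationIdeal n K ≤ RingHom.ker (eval (evalPoint q n e)) := by
  have hq' (k : ℕ) : (q ^ k) ^ n = 1 := by rw [← pow_mul, mul_comm, pow_mul, hq, one_pow]
  rw [relationIdeal, relations, Ideal.span_le]
  rintro p (rfl | rfl | rfl | rfl | rfl) <;> rcases e with ⟨i, j⟩ | ⟨⟩ <;>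
    simp [RingHom.mem_ker, evalPoint, hq']
  ring

noncomputable def evalAtPoints {q : K} (hq : q ^ n = 1) :
    RelationQuotient n K →ₐ[K] ((Fin n × Fin n) ⊕ Unit → K) :=
  Ideal.Quotient.liftₐ _ (AlgHom.pi fun e => aeval (evalPoint q n e))
    fun _ hp => funext fun e => by simpa using relationIdeal_le_ker_eval hq e hp

theorem evalAtPoints_surjective {q : K} (hq : IsPrimitiveRoot q n) (hn : (n : K) ≠ 0) :
    Function.Surjective (evalAtPoints hq.pow_eq_one) := by
  intro c
  obtain ⟨p, hp⟩ := exists_eval_eq_of_injective (evalPoint_injective hq hn) c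
  exact ⟨Ideal.Quotient.mk _ p, funext hp⟩

theorem evalAtPoints_bijective {q : K} (hq : IsPrimitiveRoot q n) (hn : (n : K) ≠ 0) :
    Function.Bijective (evalAtPoints hq.pow_eq_one) := by
  have hn0 : 0 < n := Nat.pos_of_ne_zero fun h => hn (h ▸ Nat.cast_zero)
  have := finite_of_pos (K := K) hn0
  refine OrzechProperty.bijective_of_surjective_of_finrank_le
    (evalAtPoints hq.pow_eq_one).toLinearMap (evalAtPoints_surjective hq hn) ?_
  simpa [sq] using finrank_le hn0

end RelationQuotient

open RelationQuotient in
theorem stmt_9_general (n : ℕ) (K : Type*) [Field K]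
    (hchar : ¬ (ringChar K ∣ n)) (q : K) (hq : IsPrimitiveRoot q n)
    (I : Ideal (MvPolynomial (Fin 3) K))
    (hI : I = Ideal.span
      { X 0 ^ n - 1, X 1 ^ n - 1, X 2 ^ 2 - (n : MvPolynomial (Fin 3) K) ^ 2 * X 2,
        (1 - X 0) * X 2, (1 - X 1) * X 2 }) :
    Nonempty ((MvPolynomial (Fin 3) K ⧸ I) ≃ₐ[K] (Fin (n ^ 2 + 1) → K)) := by
  subst hI
  have hn : (n : K) ≠ 0 := fun h => hchar ((ringChar.spec K n).mp h)
  have hcard : Fintype.card ((Fin n × Fin n) ⊕ Unit) = n ^ 2 + 1 := by simp [sq]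
  exact ⟨(AlgEquiv.ofBijective _ (evalAtPoints_bijective hq hn)).trans
    (AlgEquiv.piCongrLeft K (fun _ => K) (Fintype.equivFinOfCardEq hcard))⟩

/-- `K[x,y,z]/(xⁿ-1, yⁿ-1, z²-n²z, (1-x)z, (1-y)z)` is isomorphic as a `K`-algebra to
`K^{n²+1}`, for `K` a field whose characteristic does not divide `n` (containing a
primitive `n`-th root of unity). This is the semisimple quotient
`R_p(𝓗_n(q))/J(R_p(𝓗_n(q)))`. -/
theorem stmt_9 (n : ℕ) (hn : 3 ≤ n) (K : Type*) [Field K]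
    (hchar : ¬ (ringChar K ∣ n)) (q : K) (hq : IsPrimitiveRoot q n)
    (I : Ideal (MvPolynomial (Fin 3) K))
    (hI : I = Ideal.span
      { X 0 ^ n - 1, X 1 ^ n - 1, X 2 ^ 2 - (n : MvPolynomial (Fin 3) K) ^ 2 * X 2,
        (1 - X 0) * X 2, (1 - X 1) * X 2 }) :
    Nonempty ((MvPolynomial (Fin 3) K ⧸ I) ≃ₐ[K] (Fin (n ^ 2 + 1) → K)) :=
  stmt_9_general n K hchar q hq I hI
end

section
/- Let K be an algebraically closed field with char K ∤ n, n ≥ 3, and let A = K[x,y,z]/(x^n - 1, y^n - 1, z² - (Σ_{i,j=0}^{n-1} x^i y^j)·z). Then the Jacobson radical of A is the ideal generated by (1-x̄)·z̄ and (1-ȳ)·z̄, where x̄, ȳ, z̄ denote the images of x, y, z in A. -/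
/-!
Over an algebraically closed field the Jacobson radical of the finitely generated algebra `A` is
its nilradical, so by Hilbert's Nullstellensatz it suffices to show that
`J = I + ((1 - x)z, (1 - y)z)` is the radical of `I`. The generators of `J` are nilpotent modulo
`I` because `(1 - x) Σ xⁱ = 1 - xⁿ`. The zero set of `J` is `μₙ × μₙ × {0}` together with the
point `(1, 1, n²)`. Let `f` vanish there. Modulo `J`, both `x` and `y` act as `1` on `z`, and so
`z² ≡ n² z`; hence `z f ≡ f(1, 1, n²) z = 0`. Moreover `(1 - z / n²) f` vanishes on the grid
`μₙ × μₙ × {0, n²}`, so by the combinatorial Nullstellensatz it lies in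
`(xⁿ - 1, yⁿ - 1, z (z - n²)) ⊆ J`. Adding the two, `f ∈ J`.
-/

open MvPolynomial Finset

namespace MvPolynomial

theorem mem_span_prod_X_sub_C_of_eval_eq_zero {σ R : Type*} [CommRing R] [IsDomain R] [Finite σ]
    (S : σ → Finset R) (hS : ∀ i, (S i).Nonempty) (f : MvPolynomial σ R)
    (hf : ∀ x : σ → R, (∀ i, x i ∈ S i) → eval x f = 0) :
    f ∈ Ideal.span (Set.range fun i => ∏ r ∈ S i, (X i - C r)) := by
  obtain ⟨h, -, rfl⟩ := combinatorial_nullstellensatz_exists_linearCombination S hS f hf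
  exact Finsupp.mem_span_range_iff_exists_finsupp.2 ⟨h, rfl⟩

theorem sub_C_eval_mem {σ R : Type*} [CommRing R] {J : Ideal (MvPolynomial σ R)} {v : σ → R}
    (hJ : ∀ i, X i - C (v i) ∈ J) (p : MvPolynomial σ R) : p - C (eval v p) ∈ J := by
  have hmk : Ideal.Quotient.mkₐ R J = (Algebra.ofId R _).comp (aeval v) :=
    algHom_ext fun i => by
      simpa [← Ideal.Quotient.mk_algebraMap, Ideal.Quotient.eq] using hJ i
  rw [← Ideal.Quotient.eq, ← algebraMap_eq, Ideal.Quotient.mk_algebraMap]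
  simpa using congr($hmk p)

theorem prod_nthRootsFinset_X_sub_C {σ K : Type*} [Field K] {n : ℕ} {ζ : K} (hn : 0 < n)
    (hζ : IsPrimitiveRoot ζ n) (i : σ) :
    ∏ r ∈ Polynomial.nthRootsFinset n (1 : K), (X i - C r) = (X i ^ n - 1 : MvPolynomial σ K) := by
  simpa [map_prod] using
    congr(Polynomial.aeval (X i : MvPolynomial σ K) $(Polynomial.X_pow_sub_one_eq_prod hn hζ)).symm

end MvPolynomial

theorem sq_one_sub_mul_eq_zero {R : Type*} [CommRing R] {n : ℕ} {a t z : R} (ha : a ^ n = 1)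
    (hz : z ^ 2 = (∑ i ∈ range n, a ^ i) * t * z) : ((1 - a) * z) ^ 2 = 0 := by
  linear_combination (1 - a) ^ 2 * hz + (1 - a) * t * z * mul_neg_geom_sum a n
    - (1 - a) * t * z * ha

section ClassAlgebra

variable (K : Type*) [Field K] (n : ℕ)

noncomputable def relIdeal : Ideal (MvPolynomial (Fin 3) K) :=
  Ideal.span {X 0 ^ n - 1, X 1 ^ n - 1,
    X 2 ^ 2 - (∑ i ∈ range n, ∑ j ∈ range n, X 0 ^ i * X 1 ^ j) * X 2}

noncomputable def relRadical : Ideal (MvPolynomial (Fin 3) K) :=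
  relIdeal K n ⊔ Ideal.span {(1 - X 0) * X 2, (1 - X 1) * X 2}

theorem relRadical_le_radical : relRadical K n ≤ (relIdeal K n).radical := by
  have h0 : X 0 ^ n - 1 ∈ relIdeal K n := Ideal.subset_span (by simp)
  have h1 : X 1 ^ n - 1 ∈ relIdeal K n := Ideal.subset_span (by simp)
  have h2 : X 2 ^ 2 - (∑ i ∈ range n, ∑ j ∈ range n, X 0 ^ i * X 1 ^ j) * X 2 ∈ relIdeal K n :=
    Ideal.subset_span (by simp)
  set π := Ideal.Quotient.mk (relIdeal K n)
  have hx : π (X 0) ^ n = 1 := by simpa using Ideal.Quotient.eq.2 h0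
  have hy : π (X 1) ^ n = 1 := by simpa using Ideal.Quotient.eq.2 h1
  have hz : π (X 2) ^ 2 =
      (∑ i ∈ range n, π (X 0) ^ i) * (∑ j ∈ range n, π (X 1) ^ j) * π (X 2) := by
    simpa [map_sum, sum_mul_sum] using Ideal.Quotient.eq.2 h2
  have hsq : ∀ p, π p ^ 2 = 0 → p ∈ (relIdeal K n).radical := fun p hp =>
    ⟨2, Ideal.Quotient.eq_zero_iff_mem.1 (by rwa [map_pow])⟩
  refine sup_le Ideal.le_radical (Ideal.span_le.2 ?_)
  rintro p (rfl | rfl) <;> apply hsq <;> simp only [map_mul, map_sub, map_one]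
  · exact sq_one_sub_mul_eq_zero hx hz
  · exact sq_one_sub_mul_eq_zero hy (by rw [hz]; ring)

theorem X_sub_C_mul_X_two_mem_relRadical (i : Fin 3) :
    (X i - C (![1, 1, (n : K) ^ 2] i)) * X 2 ∈ relRadical K n := by
  have hx : (X 0 - 1) * X 2 ∈ relRadical K n := by
    have h : (1 - X 0) * X 2 ∈ relRadical K n := Ideal.mem_sup_right (Ideal.subset_span (by simp))
    simpa only [← neg_mul, neg_sub] using neg_mem h
  have hy : (X 1 - 1) * X 2 ∈ relRadical K n := by
    have h : (1 - X 1) * X 2 ∈ relRadical K n := Ideal.mem_sup_right (Ideal.subset_span (by simp))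
    simpa only [← neg_mul, neg_sub] using neg_mem h
  fin_cases i
  · simpa using hx
  · simpa using hy
  have hz : X 2 ^ 2 - (∑ i ∈ range n, ∑ j ∈ range n, X 0 ^ i * X 1 ^ j) * X 2 ∈ relRadical K n :=
    Ideal.mem_sup_left (Ideal.subset_span (by simp))
  set J := (relRadical K n).colon {X 2}
  have hx' : Ideal.Quotient.mk J (X 0) = 1 := by
    rw [← map_one (Ideal.Quotient.mk J), Ideal.Quotient.eq, Submodule.mem_colon_singleton,
      smul_eq_mul]
    exact hx
  have hy' : Ideal.Quotient.mk J (X 1) = 1 := by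
    rw [← map_one (Ideal.Quotient.mk J), Ideal.Quotient.eq, Submodule.mem_colon_singleton,
      smul_eq_mul]
    exact hy
  have hS : (∑ i ∈ range n, ∑ j ∈ range n, X 0 ^ i * X 1 ^ j) - C ((n : K) ^ 2) ∈ J := by
    rw [← Ideal.Quotient.eq]
    simp [map_sum, hx', hy', sq]
  rw [Submodule.mem_colon_singleton, smul_eq_mul] at hS
  simpa [sq, sub_mul] using add_mem hz hS

theorem mem_zeroLocus_relRadical {x : Fin 3 → K} (h0 : x 0 ^ n = 1) (h1 : x 1 ^ n = 1)
    (hx : (1 - x 0) * x 2 = 0) (hy : (1 - x 1) * x 2 = 0)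
    (hz : x 2 ^ 2 = (∑ i ∈ range n, ∑ j ∈ range n, x 0 ^ i * x 1 ^ j) * x 2) :
    x ∈ zeroLocus K (relRadical K n) := by
  suffices relRadical K n ≤ RingHom.ker (aeval x) from fun p hp => this hp
  refine sup_le (Ideal.span_le.2 ?_) (Ideal.span_le.2 ?_) <;>
    simp [Set.insert_subset_iff, h0, h1, hx, hy, hz]

theorem X_two_mul_mem_relRadical {f : MvPolynomial (Fin 3) K}
    (hf : eval ![1, 1, (n : K) ^ 2] f = 0) : X 2 * f ∈ relRadical K n := by
  have h := sub_C_eval_mem (J := (relRadical K n).colon {X 2})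
    (fun i => by simpa using X_sub_C_mul_X_two_mem_relRadical K n i) f
  rw [hf, C_0, sub_zero, Submodule.mem_colon_singleton, smul_eq_mul] at h
  rwa [mul_comm]

theorem mul_mem_relRadical_of_eval_eq_zero {ζ : K} (hζ : IsPrimitiveRoot ζ n)
    (hn : (n : K) ≠ 0) {f : MvPolynomial (Fin 3) K}
    (hf : ∀ x : Fin 3 → K, x 0 ^ n = 1 → x 1 ^ n = 1 → x 2 = 0 → eval x f = 0) :
    (1 - C ((n : K) ^ 2)⁻¹ * X 2) * f ∈ relRadical K n := by
  classical
  have hn0 : 0 < n := Nat.pos_of_ne_zero (by rintro rfl; simp at hn)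
  set S : Fin 3 → Finset K :=
    ![Polynomial.nthRootsFinset n (1 : K), Polynomial.nthRootsFinset n (1 : K), {0, (n : K) ^ 2}]
  refine Ideal.span_le.2 ?_ (mem_span_prod_X_sub_C_of_eval_eq_zero S ?_ _ ?_)
  · rintro _ ⟨i, rfl⟩
    fin_cases i
    · have h : X 0 ^ n - 1 ∈ relRadical K n := Ideal.mem_sup_left (Ideal.subset_span (by simp))
      simpa [S, prod_nthRootsFinset_X_sub_C hn0 hζ] using h
    · have h : X 1 ^ n - 1 ∈ relRadical K n := Ideal.mem_sup_left (Ideal.subset_span (by simp))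
      simpa [S, prod_nthRootsFinset_X_sub_C hn0 hζ] using h
    · simpa [S, Finset.prod_pair (pow_ne_zero 2 hn).symm, mul_comm]
        using X_sub_C_mul_X_two_mem_relRadical K n 2
  · intro i
    fin_cases i
    · exact ⟨1, by simp [S, hn0]⟩
    · exact ⟨1, by simp [S, hn0]⟩
    · simp [S]
  · intro x hx
    have h0 : x 0 ^ n = 1 := by simpa [S, hn0] using hx 0
    have h1 : x 1 ^ n = 1 := by simpa [S, hn0] using hx 1
    have h2 : x 2 = 0 ∨ x 2 = (n : K) ^ 2 := by simpa [S] using hx 2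
    rcases h2 with h2 | h2
    · simp [h2, hf x h0 h1 h2]
    · simp [h2, hn]

theorem relRadical_isRadical [IsAlgClosed K] (hn : (n : K) ≠ 0) :
    (relRadical K n).IsRadical := by
  intro f hf
  rw [← vanishingIdeal_zeroLocus_eq_radical (K := K), mem_vanishingIdeal_iff] at hf
  have : NeZero (n : K) := ⟨hn⟩
  obtain ⟨ζ, hζ⟩ := HasEnoughRootsOfUnity.exists_primitiveRoot K n
  have hz : X 2 * f ∈ relRadical K n :=
    X_two_mul_mem_relRadical K n <| hf _ <| mem_zeroLocus_relRadical K n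
      (by simp) (by simp) (by simp) (by simp) (by simp [sq])
  have hgrid : (1 - C ((n : K) ^ 2)⁻¹ * X 2) * f ∈ relRadical K n :=
    mul_mem_relRadical_of_eval_eq_zero K n hζ hn fun x h0 h1 h2 =>
      hf x <| mem_zeroLocus_relRadical K n h0 h1 (by simp [h2]) (by simp [h2]) (by simp [h2])
  have hsplit : f = (1 - C ((n : K) ^ 2)⁻¹ * X 2) * f + C ((n : K) ^ 2)⁻¹ * (X 2 * f) := by ring
  rw [hsplit]
  exact add_mem hgrid (Ideal.mul_mem_left _ _ hz)

theorem radical_relIdeal [IsAlgClosed K] (hn : (n : K) ≠ 0) :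
    (relIdeal K n).radical = relRadical K n :=
  le_antisymm ((Ideal.radical_mono le_sup_left).trans (relRadical_isRadical K n hn))
    (relRadical_le_radical K n)

end ClassAlgebra

theorem stmt_11_general (n : ℕ) (K : Type*) [Field K] [IsAlgClosed K]
    (hchar : ¬ (ringChar K ∣ n))
    (I : Ideal (MvPolynomial (Fin 3) K))
    (hI : I = Ideal.span
      { X 0 ^ n - 1, X 1 ^ n - 1,
        X 2 ^ 2 - (∑ i ∈ range n, ∑ j ∈ range n, X 0 ^ i * X 1 ^ j) * X 2 }) :
    (⊥ : Ideal (MvPolynomial (Fin 3) K ⧸ I)).jacobson =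
      Ideal.span { Ideal.Quotient.mk I ((1 - X 0) * X 2),
                   Ideal.Quotient.mk I ((1 - X 1) * X 2) } := by
  obtain rfl : I = relIdeal K n := hI
  have hn : (n : K) ≠ 0 := fun h => hchar ((ringChar.spec K n).1 h)
  rw [← Ideal.radical_eq_jacobson, ← Ideal.map_quotient_self (relIdeal K n),
    ← Ideal.map_radical_of_surjective Ideal.Quotient.mk_surjective (by rw [Ideal.mk_ker]),
    radical_relIdeal K n hn, relRadical, Ideal.map_sup, Ideal.map_quotient_self, bot_sup_eq,
    Ideal.map_span, Set.image_pair]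

/-- The Jacobson radical of the projective class algebra
`A = K[x,y,z]/(xⁿ-1, yⁿ-1, z² - (Σ xⁱyʲ)z)` of `𝓗_n(q)` is generated by
`(1-x̄)z̄` and `(1-ȳ)z̄`. -/
theorem stmt_11 (n : ℕ) (hn : 3 ≤ n) (K : Type*) [Field K] [IsAlgClosed K]
    (hchar : ¬ (ringChar K ∣ n))
    (I : Ideal (MvPolynomial (Fin 3) K))
    (hI : I = Ideal.span
      { X 0 ^ n - 1, X 1 ^ n - 1,
        X 2 ^ 2 - (∑ i ∈ range n, ∑ j ∈ range n, X 0 ^ i * X 1 ^ j) * X 2 }) :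
    (⊥ : Ideal (MvPolynomial (Fin 3) K ⧸ I)).jacobson =
      Ideal.span { Ideal.Quotient.mk I ((1 - X 0) * X 2),
                   Ideal.Quotient.mk I ((1 - X 1) * X 2) } :=
  stmt_11_general n K hchar I hI
end

section
/- Let K be an algebraically closed field with char K ∤ n, n ≥ 3, and let A = K[x,y,z]/(x^n - 1, y^n - 1, z² - n·(Σ_{i=0}^{n-1} x^i)·z). Then the Jacobson radical of A is the ideal generated by (1-x̄)·z̄, where x̄, z̄ denote the images of x, z in A. -/
/-!
Put `t = (1 - x) z`. Since `(1 - x)(Σ xⁱ) = 1 - xⁿ = 0` in `A`, the relation for `z` gives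
`t² = 0`, so `(t)` lies in the nilradical, which is the Jacobson radical of the finitely
generated `K`-algebra `A`. Conversely `A/(t)` is reduced: there `xz = z`, so `(Σ xⁱ) z = n z` and
`z` is a root of `Z(Z - n²)`, while `x` and `y` are roots of the separable `Xⁿ - 1`. An ideal of
`K[X_σ]` containing, for every variable, a product of distinct linear factors in that variable is
radical: splitting off those factors one variable at a time (Chinese remainder theorem) writes it
as an intersection of ideals containing all `X_i - a_i`, and each of these is maximal or the unit
ideal.
-/

open MvPolynomial Finset

namespace Ideal

variable {R : Type*} [CommRing R]

theorem isRadical_of_prod_mem {ι : Type*} {I : Ideal R} {s : Finset ι} {f : ι → R}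
    (hf : (s : Set ι).Pairwise fun i j => IsCoprime (f i) (f j)) (hprod : ∏ i ∈ s, f i ∈ I)
    (hrad : ∀ i ∈ s, (I ⊔ span {f i}).IsRadical) : I.IsRadical := by
  have hinf : s.inf (fun i => I ⊔ span {f i}) =
      (span {Quotient.mk I (∏ i ∈ s, f i)}).comap (Quotient.mk I) := by
    rw [map_prod, ← finset_inf_span_singleton _ _ (hf.mono' fun _ _ h => h.map _),
      comap_finsetInf]
    refine Finset.inf_congr rfl fun i _ => ?_
    have hspan : span {Quotient.mk I (f i)} = (span {f i}).map (Quotient.mk I) := by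
      rw [map_span, Set.image_singleton]
    rw [hspan, comap_map_of_surjective _ Quotient.mk_surjective,
      ← RingHom.ker_eq_comap_bot, mk_ker, sup_comm]
  have hle : s.inf (fun i => I ⊔ span {f i}) ≤ I := by
    rw [hinf, Quotient.eq_zero_iff_mem.mpr hprod, span_singleton_eq_bot.mpr rfl,
      ← RingHom.ker_eq_comap_bot, mk_ker]
  exact (Finset.le_inf fun i hi => (radical_mono le_sup_left).trans (hrad i hi)).trans hle

theorem isRadical_span_mk_of_isRadical_sup {I : Ideal R} {a : R} (h : (I ⊔ span {a}).IsRadical) :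
    (span {Quotient.mk I a}).IsRadical := by
  have hmap : (I ⊔ span {a}).map (Quotient.mk I) = span {Quotient.mk I a} := by
    rw [map_sup, map_quotient_self, bot_sup_eq, map_span, Set.image_singleton]
  rw [IsRadical, ← hmap, ← map_radical_of_surjective Quotient.mk_surjective
    (mk_ker.trans_le le_sup_left), h.radical]

theorem radical_bot_eq_of_isRadical {J : Ideal R} (hJ : J.IsRadical)
    (hnil : J ≤ (⊥ : Ideal R).radical) : (⊥ : Ideal R).radical = J :=
  le_antisymm ((radical_mono bot_le).trans hJ) hnil

end Ideal

namespace MvPolynomial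

theorem sub_C_eval_mem_of_forall_X_sub_C_mem {σ R : Type*} [CommRing R]
    {J : Ideal (MvPolynomial σ R)} {a : σ → R} (h : ∀ i, X i - C (a i) ∈ J)
    (p : MvPolynomial σ R) : p - C (eval a p) ∈ J := by
  induction p using MvPolynomial.induction_on with
  | C c => simp
  | add p q hp hq => simpa [add_sub_add_comm] using J.add_mem hp hq
  | mul_X p i hp =>
    have hsplit : p * X i - C (eval a (p * X i)) =
        (p - C (eval a p)) * X i + C (eval a p) * (X i - C (a i)) := by
      simp only [eval_mul, eval_X, C_mul]; ring
    rw [hsplit]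
    exact J.add_mem (J.mul_mem_right _ hp) (J.mul_mem_left _ (h i))

variable {σ K : Type*} [Field K] {J : Ideal (MvPolynomial σ K)}

theorem isRadical_of_forall_X_sub_C_mem {a : σ → K} (h : ∀ i, X i - C (a i) ∈ J) :
    J.IsRadical := by
  rintro p ⟨k, hk⟩
  by_cases hp : eval a p = 0
  · simpa [hp] using sub_C_eval_mem_of_forall_X_sub_C_mem h p
  · have hunit : C (eval a p ^ k) ∈ J := by
      simpa using J.sub_mem hk (sub_C_eval_mem_of_forall_X_sub_C_mem h (p ^ k))
    rw [J.eq_top_of_isUnit_mem hunit ((pow_ne_zero k hp).isUnit.map C)]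
    trivial

theorem isRadical_of_forall_prod_X_sub_C_mem [Finite σ]
    (h : ∀ i, ∃ S : Finset K, ∏ a ∈ S, (X i - C a) ∈ J) : J.IsRadical := by
  classical
  have := Fintype.ofFinite σ
  suffices ∀ V : Finset σ, ∀ J' ≥ J, (∀ i ∉ V, ∃ a, X i - C a ∈ J') → J'.IsRadical from
    this univ J le_rfl (by simp)
  intro V
  induction V using Finset.induction_on with
  | empty =>
    intro J' _ hpinned
    choose a ha using fun i => hpinned i (Finset.notMem_empty i)
    exact isRadical_of_forall_X_sub_C_mem ha
  | insert i V _ ih =>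
    intro J' hJ hpinned
    obtain ⟨S, hS⟩ := h i
    refine Ideal.isRadical_of_prod_mem (fun a _ b _ hab => ?_) (hJ hS)
      fun a _ => ih _ (hJ.trans le_sup_left) fun j hj => ?_
    · have hcop := (Polynomial.pairwise_coprime_X_sub_C (K := K) Function.injective_id hab).map
        (Polynomial.aeval (R := K) (X i : MvPolynomial σ K)).toRingHom
      simpa using hcop
    · by_cases hji : j = i
      · exact ⟨a, hji ▸ Ideal.mem_sup_right (Ideal.mem_span_singleton_self _)⟩
      · obtain ⟨b, hb⟩ := hpinned j (by simp [hji, hj])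
        exact ⟨b, Ideal.mem_sup_left hb⟩

theorem X_pow_sub_one_eq_prod_nthRootsFinset {n : ℕ} (hn : 0 < n) {ζ : K}
    (hζ : IsPrimitiveRoot ζ n) (i : σ) :
    (X i : MvPolynomial σ K) ^ n - 1 = ∏ a ∈ Polynomial.nthRootsFinset n (1 : K), (X i - C a) := by
  simpa [map_prod] using
    congrArg (Polynomial.aeval (X i : MvPolynomial σ K)) (Polynomial.X_pow_sub_one_eq_prod hn hζ)

end MvPolynomial

section Relations

variable {R : Type*} [CommRing R] {I : Ideal R} {x z : R} {n : ℕ}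

theorem one_sub_mul_sq_mem (hx : x ^ n - 1 ∈ I)
    (hz : z ^ 2 - n * (∑ i ∈ range n, x ^ i) * z ∈ I) : ((1 - x) * z) ^ 2 ∈ I := by
  have hgeom : (1 - x) * ∑ i ∈ range n, x ^ i = 1 - x ^ n := by
    linear_combination -(geom_sum_mul x n)
  have hsq : ((1 - x) * z) ^ 2 =
      (1 - x) ^ 2 * (z ^ 2 - n * (∑ i ∈ range n, x ^ i) * z)
        - (n * (1 - x) * z) * (x ^ n - 1) := by
    linear_combination (n * (1 - x) * z) * hgeom
  rw [hsq]
  exact I.sub_mem (I.mul_mem_left _ hz) (I.mul_mem_left _ hx)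

theorem mul_sub_natCast_sq_mem_sup (hz : z ^ 2 - n * (∑ i ∈ range n, x ^ i) * z ∈ I) :
    z * (z - n ^ 2) ∈ I ⊔ Ideal.span {(1 - x) * z} := by
  obtain ⟨q, hq⟩ : 1 - x ∣ ∑ i ∈ range n, x ^ i - n := by
    have hterm : ∀ i ∈ range n, 1 - x ∣ x ^ i - 1 := fun i _ => by
      simpa using (sub_dvd_pow_sub_pow x 1 i).neg_left
    simpa [Finset.sum_sub_distrib] using Finset.dvd_sum hterm
  have hsplit : z * (z - n ^ 2) =
      (z ^ 2 - n * (∑ i ∈ range n, x ^ i) * z) + (n * q) * ((1 - x) * z) := by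
    linear_combination (n * z) * hq
  rw [hsplit]
  exact Ideal.add_mem _ (Ideal.mem_sup_left hz)
    (Ideal.mem_sup_right (Ideal.mul_mem_left _ _ (Ideal.mem_span_singleton_self _)))

end Relations

theorem stmt_12_general (n : ℕ) (K : Type*) [Field K] [IsAlgClosed K]
    (hchar : ¬ (ringChar K ∣ n))
    (I : Ideal (MvPolynomial (Fin 3) K))
    (hI : I = Ideal.span
      { X 0 ^ n - 1, X 1 ^ n - 1,
        X 2 ^ 2 - (n : MvPolynomial (Fin 3) K) * (∑ i ∈ range n, X 0 ^ i) * X 2 }) :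
    (⊥ : Ideal (MvPolynomial (Fin 3) K ⧸ I)).jacobson =
      Ideal.span { Ideal.Quotient.mk I ((1 - X 0) * X 2) } := by
  classical
  have hnK : (n : K) ≠ 0 := fun h => hchar ((CharP.cast_eq_zero_iff K (ringChar K) n).mp h)
  have hn : 0 < n := Nat.pos_of_ne_zero (by rintro rfl; exact hnK Nat.cast_zero)
  have : NeZero (n : K) := ⟨hnK⟩
  obtain ⟨ζ, hζ⟩ := HasEnoughRootsOfUnity.exists_primitiveRoot K n
  have hx : X 0 ^ n - 1 ∈ I := hI ▸ Ideal.subset_span (by simp)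
  have hy : X 1 ^ n - 1 ∈ I := hI ▸ Ideal.subset_span (by simp)
  have hz : X 2 ^ 2 - (n : MvPolynomial (Fin 3) K) * (∑ i ∈ range n, X 0 ^ i) * X 2 ∈ I :=
    hI ▸ Ideal.subset_span (by simp)
  have hrad : (I ⊔ Ideal.span {(1 - X 0) * X 2}).IsRadical := by
    refine isRadical_of_forall_prod_X_sub_C_mem fun i => ?_
    fin_cases i
    · exact ⟨_, X_pow_sub_one_eq_prod_nthRootsFinset hn hζ _ ▸ Ideal.mem_sup_left hx⟩
    · exact ⟨_, X_pow_sub_one_eq_prod_nthRootsFinset hn hζ _ ▸ Ideal.mem_sup_left hy⟩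
    · refine ⟨{0, (n : K) ^ 2}, ?_⟩
      rw [Finset.prod_pair (pow_ne_zero 2 hnK).symm]
      simpa using mul_sub_natCast_sq_mem_sup hz
  rw [← Ideal.radical_eq_jacobson,
    Ideal.radical_bot_eq_of_isRadical (Ideal.isRadical_span_mk_of_isRadical_sup hrad)]
  rw [Ideal.span_le, Set.singleton_subset_iff]
  refine ⟨2, ?_⟩
  rw [← map_pow, Ideal.mem_bot, Ideal.Quotient.eq_zero_iff_mem]
  exact one_sub_mul_sq_mem hx hz

/-- The Jacobson radical of the projective class algebra
`A = K[x,y,z]/(xⁿ-1, yⁿ-1, z² - n(Σ xⁱ)z)` of `H_n(0,q)` is generated by `(1-x̄)z̄`. -/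
theorem stmt_12 (n : ℕ) (hn : 3 ≤ n) (K : Type*) [Field K] [IsAlgClosed K]
    (hchar : ¬ (ringChar K ∣ n))
    (I : Ideal (MvPolynomial (Fin 3) K))
    (hI : I = Ideal.span
      { X 0 ^ n - 1, X 1 ^ n - 1,
        X 2 ^ 2 - (n : MvPolynomial (Fin 3) K) * (∑ i ∈ range n, X 0 ^ i) * X 2 }) :
    (⊥ : Ideal (MvPolynomial (Fin 3) K ⧸ I)).jacobson =
      Ideal.span { Ideal.Quotient.mk I ((1 - X 0) * X 2) } :=
  stmt_12_general n K hchar I hI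
end

section
/- In the polynomial ring ℚ[x,y], for every n ≥ 3 the identity Σ_{i=0}^{⌊(n-1)/2⌋} (-1)^i ((n-1)/(n-1-i))·C(n-1-i,i)·x^i·y^{n-2i} − Σ_{i=1}^{⌊n/2⌋} (-1)^{i-1} ((n-2)/(n-1-i))·C(n-1-i,i-1)·x^i·y^{n-2i} − 2 = Σ_{i=0}^{⌊n/2⌋} (-1)^i (n/(n-i))·C(n-i,i)·x^i·y^{n-2i} − 2 holds, where C denotes the binomial coefficient. -/
/-!
With `d n i = n / (n - i) * C(n - i, i)`, the polynomial `Σ (-1)ⁱ d n i xⁱ y^{n-2i}` is the Dickson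
polynomial `Dₙ(y, x)`. The first sum has the coefficients `d (n-1) i` and the second the coefficients
`d (n-2) (i-1)`, so the identity is the recurrence `Dₙ = y Dₙ₋₁ - x Dₙ₋₂` read coefficientwise:
`d n i = d (n-1) i + d (n-2) (i-1)`, which follows from Pascal's rule and the absorption identity.
-/

open MvPolynomial Finset

def dicksonCoeff (n i : ℕ) : ℚ := (n : ℚ) / ((n : ℚ) - i) * ((n - i).choose i : ℚ)

theorem dicksonCoeff_add_two_add_one {m i : ℕ} (h : i < m) :
    dicksonCoeff (m + 2) (i + 1) = dicksonCoeff (m + 1) (i + 1) + dicksonCoeff m i := by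
  obtain ⟨k, rfl⟩ := Nat.exists_eq_add_of_lt h
  have hpascal : ((k + 2).choose (i + 1) : ℚ) = (k + 1).choose i + (k + 1).choose (i + 1) := by
    exact_mod_cast Nat.choose_succ_succ (k + 1) i
  have habsorb : ((k + 2 : ℕ) : ℚ) * (k + 1).choose i = (k + 2).choose (i + 1) * (i + 1 : ℕ) := by
    exact_mod_cast Nat.add_one_mul_choose_eq (k + 1) i
  simp only [dicksonCoeff, show i + k + 1 + 2 - (i + 1) = k + 2 by omega,
    show i + k + 1 + 1 - (i + 1) = k + 1 by omega, show i + k + 1 - i = k + 1 by omega]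
  push_cast at habsorb ⊢
  rw [show (i : ℚ) + k + 1 + 2 - (i + 1) = k + 2 by ring,
    show (i : ℚ) + k + 1 + 1 - (i + 1) = k + 1 by ring, show (i : ℚ) + k + 1 - i = k + 1 by ring]
  field_simp
  linear_combination habsorb + ((k : ℚ) + 2) * (i + k + 2) * hpascal

theorem sub_eq_neg_one_pow_mul_dicksonCoeff {n i : ℕ} (hi : 1 ≤ i) (hin : i + 1 < n) :
    (-1 : ℚ) ^ i * (((n : ℚ) - 1) / ((n : ℚ) - 1 - i)) * ((n - 1 - i).choose i : ℚ)
      - (-1 : ℚ) ^ (i - 1) * (((n : ℚ) - 2) / ((n : ℚ) - 1 - i)) * ((n - 1 - i).choose (i - 1) : ℚ)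
    = (-1 : ℚ) ^ i * dicksonCoeff n i := by
  obtain ⟨m, rfl⟩ : ∃ m, n = m + 2 := ⟨n - 2, by omega⟩
  obtain ⟨j, rfl⟩ : ∃ j, i = j + 1 := ⟨i - 1, by omega⟩
  rw [dicksonCoeff_add_two_add_one (by omega)]
  simp only [dicksonCoeff, Nat.add_sub_cancel, show m + 2 - 1 - (j + 1) = m + 1 - (j + 1) by omega,
    show m + 1 - (j + 1) = m - j by omega]
  push_cast
  ring

theorem sum_range_sub_sum_Icc {M : Type*} [AddCommGroup M] (m : ℕ) {f g h : ℕ → M}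
    (h0 : f 0 = h 0) (hi : ∀ i ∈ Icc 1 m, f i - g i = h i) :
    ∑ i ∈ range (m + 1), f i - ∑ i ∈ Icc 1 m, g i = ∑ i ∈ range (m + 1), h i := by
  rw [range_eq_Ico, sum_eq_sum_Ico_succ_bot (by omega : 0 < m + 1),
    sum_eq_sum_Ico_succ_bot (by omega : 0 < m + 1), zero_add, Ico_add_one_right_eq_Icc,
    add_sub_assoc, ← sum_sub_distrib, h0, sum_congr rfl hi]

/-- The key polynomial identity in the proof of the defining relation of the
projective class ring `r_p(H_n(1,q))`, in `ℚ[x,y]`: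
`Σ_{i=0}^{⌊(n-1)/2⌋} (-1)ⁱ ((n-1)/(n-1-i)) C(n-1-i,i) xⁱ y^{n-2i}`
`− Σ_{i=1}^{⌊n/2⌋} (-1)^{i-1} ((n-2)/(n-1-i)) C(n-1-i,i-1) xⁱ y^{n-2i} − 2`
`= Σ_{i=0}^{⌊n/2⌋} (-1)ⁱ (n/(n-i)) C(n-i,i) xⁱ y^{n-2i} − 2`. -/
theorem stmt_15 (n : ℕ) (hn : 3 ≤ n) :
    (∑ i ∈ range ((n - 1) / 2 + 1),
        C ((-1 : ℚ) ^ i * (((n : ℚ) - 1) / ((n : ℚ) - 1 - i)) * (Nat.choose (n - 1 - i) i : ℚ)) *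
          X 0 ^ i * X 1 ^ (n - 2 * i))
      - (∑ i ∈ Icc 1 (n / 2),
        C ((-1 : ℚ) ^ (i - 1) * (((n : ℚ) - 2) / ((n : ℚ) - 1 - i)) *
            (Nat.choose (n - 1 - i) (i - 1) : ℚ)) *
          X 0 ^ i * X 1 ^ (n - 2 * i))
      - 2
    = (∑ i ∈ range (n / 2 + 1),
        C ((-1 : ℚ) ^ i * ((n : ℚ) / ((n : ℚ) - i)) * (Nat.choose (n - i) i : ℚ)) *
          X 0 ^ i * X 1 ^ (n - 2 * i)) - 2 := by
  rw [sub_left_inj, sum_subset (range_subset_range.2 (by omega : (n - 1) / 2 + 1 ≤ n / 2 + 1))]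
  · apply sum_range_sub_sum_Icc
    · have hn1 : (n : ℚ) - 1 ≠ 0 := sub_ne_zero.2 (by exact_mod_cast (by omega : n ≠ 1))
      have hn0 : (n : ℚ) ≠ 0 := by exact_mod_cast (by omega : n ≠ 0)
      simp [hn1, hn0]
    · intro i hi
      rw [mem_Icc] at hi
      rw [← sub_mul, ← sub_mul, ← map_sub, sub_eq_neg_one_pow_mul_dicksonCoeff hi.1 (by omega),
        dicksonCoeff]
      simp only [mul_assoc]
  · intro i hi hi'
    simp only [mem_range] at hi hi'
    simp [Nat.choose_eq_zero_of_lt (show n - 1 - i < i by omega)]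
end

section
/- Let n ≥ 3 and let I be the ideal of ℤ[x,y] generated by x^n − 1 and the product (Σ_{i=0}^{⌊n/2⌋} (-1)^i (n/(n-i))·C(n-i,i)·x^i·y^{n-2i} − 2)·(Σ_{i=0}^{⌊(n-1)/2⌋} (-1)^i·C(n-1-i,i)·x^i·y^{n-1-2i}). Then ℤ[x,y]/I is a free ℤ-module of rank n(2n−1) with basis the images of {x^l·y^m : 0 ≤ l ≤ n−1, 0 ≤ m ≤ 2n−2}. -/
/-!
Under `ℤ[x, y] ≅ ℤ[x][y]` the quotient becomes `(ℤ[x]/(xⁿ - 1))[y]/(f)`, where the second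
generator `f = (W_n - 2)·V_n` is monic in `y` of degree `n + (n - 1) = 2n - 1`. Both steps adjoin
a root of a monic polynomial, so each has a power basis, and the tower of the two power bases
is `{xˡyᵐ}`.
-/

section

open Polynomial

theorem AdjoinRoot.ker_mk {S : Type*} [CommRing S] (f : S[X]) :
    RingHom.ker (AdjoinRoot.mk f) = Ideal.span {f} :=
  Ideal.mk_ker

theorem AdjoinRoot.powerBasisAux'_apply {S : Type*} [CommRing S] {g : S[X]} (hg : g.Monic)
    (i : Fin g.natDegree) : AdjoinRoot.powerBasisAux' hg i = AdjoinRoot.root g ^ (i : ℕ) :=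
  (AdjoinRoot.powerBasis' hg).basis_eq_pow i

theorem AdjoinRoot.nontrivial_of_monic {S : Type*} [CommRing S] {g : S[X]} (hg : g.Monic)
    (hg0 : 0 < g.natDegree) : Nontrivial (AdjoinRoot g) := by
  have : Nontrivial S := by
    by_contra h
    rw [not_nontrivial_iff_subsingleton] at h
    simp [natDegree_of_subsingleton] at hg0
  exact nontrivial_of_ne _ _ ((AdjoinRoot.powerBasisAux' hg).ne_zero ⟨0, hg0⟩)

end

namespace Polynomial

section Quotient

variable {R : Type*} [CommRing R]

theorem ker_mk_comp_mapRingHom_mk (g : R[X]) (f : R[X][X]) :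
    RingHom.ker ((AdjoinRoot.mk (f.map (AdjoinRoot.mk g))).comp (mapRingHom (AdjoinRoot.mk g))) =
      Ideal.span {C g, f} := by
  have hsurj : Function.Surjective (mapRingHom (AdjoinRoot.mk g)) :=
    map_surjective _ AdjoinRoot.mk_surjective
  rw [← RingHom.comap_ker, AdjoinRoot.ker_mk, ← coe_mapRingHom, ← Set.image_singleton,
    ← Ideal.map_span, Ideal.comap_map_of_surjective' _ hsurj, ker_mapRingHom, AdjoinRoot.ker_mk,
    Ideal.map_span, Set.image_singleton, Ideal.span_insert, sup_comm]

noncomputable def quotientSpanCEquivAdjoinRoot (g : R[X]) (f : R[X][X]) :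
    (R[X][X] ⧸ Ideal.span {C g, f}) ≃ₐ[R] AdjoinRoot (f.map (AdjoinRoot.mk g)) :=
  let φ : R[X][X] →ₐ[R] AdjoinRoot (f.map (AdjoinRoot.mk g)) :=
    ((AdjoinRoot.mkₐ _).restrictScalars R).comp (mapAlgHom (AdjoinRoot.mkₐ g))
  (Ideal.quotientEquivAlgOfEq R (ker_mk_comp_mapRingHom_mk g f).symm).trans
    (Ideal.quotientKerAlgEquivOfSurjective (f := φ)
      (AdjoinRoot.mk_surjective.comp (map_surjective _ AdjoinRoot.mk_surjective)))

theorem quotientSpanCEquivAdjoinRoot_mk (g : R[X]) (f : R[X][X]) (p : R[X][X]) :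
    quotientSpanCEquivAdjoinRoot g f (Ideal.Quotient.mk _ p) =
      AdjoinRoot.mk _ (p.map (AdjoinRoot.mk g)) :=
  rfl

theorem exists_basis_quotient_span_C_of_monic {g : R[X]} {f : R[X][X]} (hg : g.Monic)
    (hg0 : 0 < g.natDegree) (hf : f.Monic) :
    ∃ B : Module.Basis (Fin g.natDegree × Fin f.natDegree) R (R[X][X] ⧸ Ideal.span {C g, f}),
      ∀ l m, B (l, m) = Ideal.Quotient.mk _ (C (X ^ (l : ℕ)) * X ^ (m : ℕ)) := by
  have := AdjoinRoot.nontrivial_of_monic hg hg0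
  let bS := AdjoinRoot.powerBasisAux' hg
  let bA := (AdjoinRoot.powerBasisAux' (hf.map (AdjoinRoot.mk g))).reindex
    (finCongr (hf.natDegree_map _))
  refine ⟨(bS.smulTower bA).map (quotientSpanCEquivAdjoinRoot g f).symm.toLinearEquiv,
    fun l m => ?_⟩
  rw [Module.Basis.map_apply, AlgEquiv.toLinearEquiv_apply, AlgEquiv.symm_apply_eq,
    quotientSpanCEquivAdjoinRoot_mk, Module.Basis.smulTower_apply, Module.Basis.reindex_apply,
    AdjoinRoot.powerBasisAux'_apply, AdjoinRoot.powerBasisAux'_apply, Algebra.smul_def,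
    AdjoinRoot.algebraMap_eq]
  simp

end Quotient

section Dickson

open Finset

theorem monic_sum_C_mul_X_pow {S : Type*} [Semiring S] [Nontrivial S] (s N : ℕ) (c : ℕ → S)
    (d : ℕ → ℕ) (hc : c 0 = 1) (hd0 : d 0 = N) (hd : ∀ i < s, d (i + 1) < N) :
    (∑ i ∈ range (s + 1), C (c i) * X ^ d i).Monic ∧
      (∑ i ∈ range (s + 1), C (c i) * X ^ d i).natDegree = N := by
  have hlow :
      (∑ i ∈ range s, C (c (i + 1)) * X ^ d (i + 1)).degree < (X ^ N : S[X]).degree := by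
    rw [degree_X_pow]
    refine (degree_sum_le _ _).trans_lt
      ((Finset.sup_lt_iff (WithBot.bot_lt_coe N)).2 fun i hi => ?_)
    exact (degree_C_mul_X_pow_le _ _).trans_lt (WithBot.coe_lt_coe.2 (hd i (mem_range.1 hi)))
  rw [sum_range_succ', hc, hd0, C_1, one_mul]
  exact ⟨(monic_X_pow N).add_of_right hlow,
    (natDegree_add_eq_right_of_degree_lt hlow).trans (natDegree_X_pow N)⟩

/- The bivariate Dickson polynomials `D_n(y, x)` and `E_n(y, x)` of the first and second kind,
as polynomials in `y` over `ℤ[x]`; in the statement `W_n = D_n` and `V_n = E_{n-1}`. -/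
noncomputable def dicksonFirst (n : ℕ) : ℤ[X][X] :=
  ∑ i ∈ range (n / 2 + 1),
    C (C ((-1 : ℤ) ^ i * ((n * Nat.choose (n - i) i / (n - i) : ℕ) : ℤ)) * X ^ i) *
      X ^ (n - 2 * i)

noncomputable def dicksonSecond (n : ℕ) : ℤ[X][X] :=
  ∑ i ∈ range (n / 2 + 1),
    C (C ((-1 : ℤ) ^ i * (Nat.choose (n - i) i : ℤ)) * X ^ i) * X ^ (n - 2 * i)

theorem monic_dicksonFirst {n : ℕ} (hn : n ≠ 0) :
    (dicksonFirst n).Monic ∧ (dicksonFirst n).natDegree = n := by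
  refine monic_sum_C_mul_X_pow _ _ _ _ ?_ (Nat.sub_zero n) fun i hi => by omega
  simp [Nat.div_self (Nat.pos_of_ne_zero hn)]

theorem monic_dicksonSecond (n : ℕ) :
    (dicksonSecond n).Monic ∧ (dicksonSecond n).natDegree = n :=
  monic_sum_C_mul_X_pow _ _ _ _ (by simp) (Nat.sub_zero n) fun i hi => by omega

theorem monic_dicksonFirst_sub_two_mul_dicksonSecond {n : ℕ} (hn : n ≠ 0) :
    ((dicksonFirst n - 2) * dicksonSecond (n - 1)).Monic ∧
      ((dicksonFirst n - 2) * dicksonSecond (n - 1)).natDegree = 2 * n - 1 := by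
  obtain ⟨hW, hWdeg⟩ := monic_dicksonFirst hn
  obtain ⟨hV, hVdeg⟩ := monic_dicksonSecond (n - 1)
  have h2 : (2 : ℤ[X][X]).natDegree < (dicksonFirst n).natDegree := by
    rw [natDegree_ofNat, hWdeg]; omega
  have hW2 : (dicksonFirst n - 2).Monic := hW.sub_of_left (degree_lt_degree h2)
  refine ⟨hW2.mul hV, ?_⟩
  rw [hW2.natDegree_mul hV, natDegree_sub_eq_left_of_natDegree_lt h2, hWdeg, hVdeg]
  omega

end Dickson

end Polynomial

namespace MvPolynomial

open scoped Polynomial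

variable (R : Type*) [CommRing R]

noncomputable def finTwoAlgEquiv : MvPolynomial (Fin 2) R ≃ₐ[R] R[X][X] :=
  (renameEquiv R (finSuccEquiv' 1)).trans
    ((optionEquivLeft R (Fin 1)).trans (Polynomial.mapAlgEquiv (uniqueAlgEquiv R (Fin 1))))

variable {R}

@[simp]
theorem finTwoAlgEquiv_X_zero : finTwoAlgEquiv R (X 0) = Polynomial.C Polynomial.X := by
  have h : finSuccEquiv' (1 : Fin 2) 0 = some 0 := rfl
  simp [finTwoAlgEquiv, Polynomial.mapAlgEquiv, h, optionEquivLeft_X_some]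

@[simp]
theorem finTwoAlgEquiv_X_one : finTwoAlgEquiv R (X 1) = Polynomial.X := by
  simp [finTwoAlgEquiv, Polynomial.mapAlgEquiv, optionEquivLeft_X_none]

end MvPolynomial

open MvPolynomial Finset

/-- `ℤ[x,y]/I`, where `I = (xⁿ − 1, (W_n − 2)·V_n)` with
`W_n = Σ_{i=0}^{⌊n/2⌋} (-1)ⁱ (n/(n-i)) C(n-i,i) xⁱ y^{n-2i}` (whose coefficients
`(n/(n-i))·C(n-i,i)` are integers, written via exact natural division) and
`V_n = Σ_{i=0}^{⌊(n-1)/2⌋} (-1)ⁱ C(n-1-i,i) xⁱ y^{n-1-2i}`, is a free `ℤ`-module of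
rank `n(2n−1)` with basis the images of `{xˡyᵐ : 0 ≤ l ≤ n−1, 0 ≤ m ≤ 2n−2}`.
This is the projective class ring `r_p(H_n(1,q))`. -/
theorem stmt_16 (n : ℕ) (hn : 3 ≤ n)
    (I : Ideal (MvPolynomial (Fin 2) ℤ))
    (hI : I = Ideal.span
      { X 0 ^ n - 1,
        ((∑ i ∈ range (n / 2 + 1),
            C ((-1 : ℤ) ^ i * ((n * Nat.choose (n - i) i / (n - i) : ℕ) : ℤ)) *
              X 0 ^ i * X 1 ^ (n - 2 * i)) - 2) *
        (∑ i ∈ range ((n - 1) / 2 + 1),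
            C ((-1 : ℤ) ^ i * (Nat.choose (n - 1 - i) i : ℤ)) *
              X 0 ^ i * X 1 ^ (n - 1 - 2 * i)) }) :
    ∃ B : Module.Basis (Fin n × Fin (2 * n - 1)) ℤ (MvPolynomial (Fin 2) ℤ ⧸ I),
      ∀ (l : Fin n) (m : Fin (2 * n - 1)),
        B (l, m) = Ideal.Quotient.mk I (X 0 ^ (l : ℕ) * X 1 ^ (m : ℕ)) := by
  have hJ : Ideal.span {Polynomial.C (Polynomial.X ^ n - 1),
      (Polynomial.dicksonFirst n - 2) * Polynomial.dicksonSecond (n - 1)} =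
      I.map (finTwoAlgEquiv ℤ : MvPolynomial (Fin 2) ℤ →+* Polynomial (Polynomial ℤ)) := by
    rw [hI, Ideal.map_span, Set.image_pair]
    simp [Polynomial.dicksonFirst, Polynomial.dicksonSecond, map_sum, map_ofNat]
  have hg : (Polynomial.X ^ n - 1 : Polynomial ℤ).Monic :=
    Polynomial.leadingCoeff_X_pow_sub_one (by omega)
  have hgdeg : (Polynomial.X ^ n - 1 : Polynomial ℤ).natDegree = n := by
    rw [← Polynomial.C_1, Polynomial.natDegree_X_pow_sub_C]
  obtain ⟨hf, hfdeg⟩ :=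
    Polynomial.monic_dicksonFirst_sub_two_mul_dicksonSecond (n := n) (by omega)
  have hbasis := Polynomial.exists_basis_quotient_span_C_of_monic hg (by rw [hgdeg]; omega) hf
  rw [hgdeg, hfdeg] at hbasis
  obtain ⟨B, hB⟩ := hbasis
  refine ⟨B.map (Ideal.quotientEquivAlg I _ (finTwoAlgEquiv ℤ) hJ).symm.toLinearEquiv,
    fun l m => ?_⟩
  rw [Module.Basis.map_apply, AlgEquiv.toLinearEquiv_apply, AlgEquiv.symm_apply_eq, hB,
    Ideal.quotientEquivAlg_mk]
  simp
end

section
/- For every n ≥ 2 and every i with 0 ≤ i ≤ ⌊n/2⌋, the rational number (n/(n-i))·C(n-i, i) is a positive integer, where C denotes the binomial coefficient. -/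
/-! For `i ≥ 1` the absorption identity `i * C(n-i, i) = (n-i) * C(n-i-1, i-1)` gives
`n / (n-i) * C(n-i, i) = C(n-i, i) + C(n-i-1, i-1)`, which is positive because `i ≤ n - i`. -/

theorem Nat.add_succ_mul_choose_succ (m j : ℕ) :
    (m + (j + 1)) * m.choose (j + 1) = m * (m.choose (j + 1) + (m - 1).choose j) := by
  cases m with
  | zero => simp
  | succ l =>
    have absorb := Nat.add_one_mul_choose_eq l j
    simp only [Nat.add_sub_cancel]
    linarith

/-- For `n ≥ 2` and `0 ≤ i ≤ ⌊n/2⌋`, the rational number `(n/(n-i))·C(n-i,i)`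
is a positive integer. -/
theorem stmt_17 (n i : ℕ) (hn : 2 ≤ n) (hi : i ≤ n / 2) :
    ∃ k : ℕ, 0 < k ∧ (n : ℚ) / ((n : ℚ) - i) * (Nat.choose (n - i) i : ℚ) = k := by
  rcases i with _ | j
  · have hn0 : (n : ℚ) ≠ 0 := by positivity
    exact ⟨1, one_pos, by simp [hn0]⟩
  obtain ⟨m, rfl⟩ : ∃ m, n = m + (j + 1) := ⟨n - (j + 1), by omega⟩
  have hjm : j + 1 ≤ m := by omega
  have hm : (m : ℚ) ≠ 0 := by exact_mod_cast (by omega : m ≠ 0)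
  refine ⟨m.choose (j + 1) + (m - 1).choose j,
    Nat.add_pos_left (Nat.choose_pos hjm) _, ?_⟩
  rw [Nat.add_sub_cancel, show ((m + (j + 1) : ℕ) : ℚ) - ((j + 1 : ℕ) : ℚ) = m by push_cast; ring,
    div_mul_eq_mul_div, div_eq_iff hm, mul_comm _ (m : ℚ)]
  exact_mod_cast Nat.add_succ_mul_choose_succ m j
end
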